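/- Let p ∈ ℝ with -2 < p and let g : [t₀, ∞) → ℝ be continuous with |g(s)| ≤ A·s^p for all s ≥ t₀ ≥ 1. Then for every t ≥ 2t₀, the truncated singular integral satisfies |∫_{t/2}^{t - t^{1-ν}} g(s)/(t - s) ds| ≤ C·A·t^p·ν·ln t for any fixed ν ∈ (0,1) and all t sufficiently large, where C is a constant depending only on p and ν. -/

import Mathlib

/-!
On `[t/2, t - t^(1-ν)]` the growth bound gives `|g s| ≤ max 1 (2^(-p)) · A · t^p`, while the kernel
integrates to `∫ ds / (t - s) = log ((t/2) / t^(1-ν)) = ν log t - log 2`.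
-/

open Real intervalIntegral

theorem integral_inv_sub_left {a b t : ℝ} (ha : a < t) (hb : b < t) :
    ∫ s in a..b, (t - s)⁻¹ = log ((t - a) / (t - b)) := by
  rw [integral_comp_sub_left (fun x => x⁻¹) t, integral_inv]
  rw [Set.mem_uIcc, not_or]
  constructor <;> rintro ⟨h₁, h₂⟩ <;> linarith

theorem abs_integral_div_sub_le {f : ℝ → ℝ} {a b t M : ℝ} (hab : a ≤ b) (hbt : b < t)
    (hM : ∀ s ∈ Set.Ioc a b, |f s| ≤ M) :
    |∫ s in a..b, f s / (t - s)| ≤ M * log ((t - a) / (t - b)) := by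
  have hcont : ContinuousOn (fun s => M * (t - s)⁻¹) (Set.uIcc a b) := by
    refine continuousOn_const.mul (ContinuousOn.inv₀ (by fun_prop) ?_)
    intro s hs
    rw [Set.uIcc_of_le hab] at hs
    linarith [hs.2]
  calc |∫ s in a..b, f s / (t - s)| ≤ ∫ s in a..b, M * (t - s)⁻¹ := by
        rw [← Real.norm_eq_abs]
        refine norm_integral_le_of_norm_le hab (Filter.Eventually.of_forall ?_)
          hcont.intervalIntegrable
        intro s hs
        have hts : 0 < t - s := by linarith [hs.2]
        rw [Real.norm_eq_abs, abs_div, abs_of_pos hts, div_eq_mul_inv]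
        exact mul_le_mul_of_nonneg_right (hM s hs) (inv_nonneg.mpr hts.le)
    _ = M * log ((t - a) / (t - b)) := by
        rw [integral_const_mul, integral_inv_sub_left (hab.trans_lt hbt) hbt]

theorem rpow_le_max_one_two_rpow_neg_mul_rpow {s t : ℝ} (p : ℝ) (ht : 0 < t)
    (hs : t / 2 ≤ s) (hst : s ≤ t) : s ^ p ≤ max 1 (2 ^ (-p)) * t ^ p := by
  have htp : 0 ≤ t ^ p := (rpow_pos_of_pos ht p).le
  rcases le_or_gt 0 p with hp | hp
  · calc s ^ p ≤ t ^ p := rpow_le_rpow (by linarith) hst hp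
      _ ≤ max 1 (2 ^ (-p)) * t ^ p := le_mul_of_one_le_left htp (le_max_left _ _)
  · calc s ^ p ≤ (t / 2) ^ p := rpow_le_rpow_of_nonpos (by positivity) hs hp.le
      _ = 2 ^ (-p) * t ^ p := by
          rw [div_rpow ht.le zero_le_two, rpow_neg zero_le_two, div_eq_inv_mul]
      _ ≤ max 1 (2 ^ (-p)) * t ^ p := mul_le_mul_of_nonneg_right (le_max_right _ _) htp

theorem two_le_rpow_of_two_rpow_inv_le {ν t : ℝ} (hν : 0 < ν) (ht : 2 ^ ν⁻¹ ≤ t) :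
    2 ≤ t ^ ν := by
  calc (2 : ℝ) = (2 ^ ν⁻¹) ^ ν := by rw [← rpow_mul zero_le_two, inv_mul_cancel₀ hν.ne', rpow_one]
    _ ≤ t ^ ν := rpow_le_rpow (by positivity) ht hν.le

theorem truncated_singular_integral_bound_general (p ν A t₀ : ℝ)
    (hν0 : 0 < ν)
    (g : ℝ → ℝ)
    (hA : ∀ s : ℝ, t₀ ≤ s → |g s| ≤ A * s ^ p) :
    ∃ C : ℝ, 0 < C ∧ ∃ T : ℝ, ∀ t : ℝ, 2 * t₀ ≤ t → T ≤ t →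
      |∫ s in (t / 2)..(t - t ^ (1 - ν)), g s / (t - s)|
        ≤ C * A * t ^ p * (ν * Real.log t) := by
  set C : ℝ := max 1 (2 ^ (-p))
  refine ⟨C, one_pos.trans_le (le_max_left _ _), 2 ^ ν⁻¹, fun t ht₀t hTt => ?_⟩
  have ht : 0 < t := (rpow_pos_of_pos two_pos _).trans_le hTt
  have htν : 2 ≤ t ^ ν := two_le_rpow_of_two_rpow_inv_le hν0 hTt
  have hsplit : t ^ (1 - ν) * t ^ ν = t := by rw [← rpow_add ht, sub_add_cancel, rpow_one]
  have hgap : 0 < t ^ (1 - ν) := rpow_pos_of_pos ht _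
  have hA0 : 0 ≤ A :=
    nonneg_of_mul_nonneg_left ((abs_nonneg _).trans (hA (t / 2) (by linarith)))
      (rpow_pos_of_pos (half_pos ht) p)
  have hbound : ∀ s ∈ Set.Ioc (t / 2) (t - t ^ (1 - ν)), |g s| ≤ C * A * t ^ p := by
    rintro s ⟨hs, hst⟩
    calc |g s| ≤ A * s ^ p := hA s (by linarith)
      _ ≤ A * (C * t ^ p) := mul_le_mul_of_nonneg_left
          (rpow_le_max_one_two_rpow_neg_mul_rpow p ht hs.le (by linarith)) hA0
      _ = C * A * t ^ p := by ring
  have hratio : t / 2 / t ^ (1 - ν) ≤ t ^ ν := by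
    rw [div_le_iff₀ hgap]
    nlinarith
  calc |∫ s in (t / 2)..(t - t ^ (1 - ν)), g s / (t - s)|
      ≤ C * A * t ^ p * log ((t - t / 2) / (t - (t - t ^ (1 - ν)))) :=
        abs_integral_div_sub_le (by nlinarith) (by linarith) hbound
    _ ≤ C * A * t ^ p * (ν * log t) := by
        rw [sub_half, sub_sub_cancel, ← log_rpow ht]
        gcongr

theorem truncated_singular_integral_bound (p ν A t₀ : ℝ)
    (hp : -2 < p) (hν0 : 0 < ν) (hν1 : ν < 1) (ht₀ : 1 ≤ t₀)
    (g : ℝ → ℝ) (hg : ContinuousOn g (Set.Ici t₀))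
    (hA : ∀ s : ℝ, t₀ ≤ s → |g s| ≤ A * s ^ p) :
    ∃ C : ℝ, 0 < C ∧ ∃ T : ℝ, ∀ t : ℝ, 2 * t₀ ≤ t → T ≤ t →
      |∫ s in (t / 2)..(t - t ^ (1 - ν)), g s / (t - s)|
        ≤ C * A * t ^ p * (ν * Real.log t) :=
  truncated_singular_integral_bound_general p ν A t₀ hν0 g hA
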